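/- arXiv:1712.03631 — 4 statements merged into one kernel-verified Lean document; each statement's English description precedes it below -/
import Mathlib

section
/- Let W̄(x) = W₀ + S₁(x − x_{i+1/2}) + (1/2)S₂(x − x_{i+1/2})² + (1/6)S₃(x − x_{i+1/2})³ + (1/24)S₄(x − x_{i+1/2})⁴ be a quartic polynomial on a uniform grid with spacing Δx and cells I_{i+k} = [x_{i+1/2} + (k−1)Δx, x_{i+1/2} + kΔx]. If the cell averages of W̄ over I_{i-1}, I_i, I_{i+1}, I_{i+2} equal W_{i-1}, W_i, W_{i+1}, W_{i+2} respectively, then S₁ = [−(1/12)(W_{i+2} − W_{i-1}) + (5/4)(W_{i+1} − W_i)]/Δx and S₂ = [−(1/8)(W_{i+2} + W_{i-1}) + (31/8)(W_{i+1} + W_i) − (15/2)W₀]/Δx². -/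
/-!
The average of the quartic over `[x_{i+1/2} + a Δx, x_{i+1/2} + b Δx]` is linear in
`W₀, S₁, …, S₄`, the coefficient of `S_k` being `Δx^k (b^{k+1} - a^{k+1}) / (k+1)!`
(with `S₀ = W₀`). In the combination of the averages over `I_{i-1}, I_i, I_{i+1}, I_{i+2}` with
weights `(1/12, -5/4, 5/4, -1/12)` every coefficient but that of `S₁ Δx` cancels, and in the
one with weights `(-1/8, 31/8, 31/8, -1/8)` every coefficient but those of `W₀` and `S₂ Δx²`.
-/

noncomputable section

def quarticExpansion (c W0 S1 S2 S3 S4 x : ℝ) : ℝ :=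
  W0 + S1 * (x - c) + (1 / 2) * S2 * (x - c) ^ 2
    + (1 / 6) * S3 * (x - c) ^ 3 + (1 / 24) * S4 * (x - c) ^ 4

def quarticExpansionPrimitive (c W0 S1 S2 S3 S4 x : ℝ) : ℝ :=
  W0 * (x - c) + S1 / 2 * (x - c) ^ 2 + S2 / 6 * (x - c) ^ 3
    + S3 / 24 * (x - c) ^ 4 + S4 / 120 * (x - c) ^ 5

end

theorem hasDerivAt_quarticExpansionPrimitive (c W0 S1 S2 S3 S4 x : ℝ) :
    HasDerivAt (quarticExpansionPrimitive c W0 S1 S2 S3 S4)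
      (quarticExpansion c W0 S1 S2 S3 S4 x) x := by
  have hsub : HasDerivAt (fun x : ℝ => x - c) 1 x := (hasDerivAt_id x).sub_const c
  refine (((((hsub.const_mul W0).add ((hsub.pow 2).const_mul (S1 / 2))).add
    ((hsub.pow 3).const_mul (S2 / 6))).add ((hsub.pow 4).const_mul (S3 / 24))).add
    ((hsub.pow 5).const_mul (S4 / 120))).congr_deriv ?_
  simp only [quarticExpansion]
  push_cast
  ring

theorem integral_quarticExpansion (c W0 S1 S2 S3 S4 a b : ℝ) :
    ∫ x in (c + a)..(c + b), quarticExpansion c W0 S1 S2 S3 S4 x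
      = W0 * (b - a) + S1 / 2 * (b ^ 2 - a ^ 2) + S2 / 6 * (b ^ 3 - a ^ 3)
        + S3 / 24 * (b ^ 4 - a ^ 4) + S4 / 120 * (b ^ 5 - a ^ 5) := by
  rw [intervalIntegral.integral_eq_sub_of_hasDerivAt
    (fun x _ => hasDerivAt_quarticExpansionPrimitive c W0 S1 S2 S3 S4 x)
    ((by unfold quarticExpansion; fun_prop : Continuous _).intervalIntegrable _ _)]
  simp only [quarticExpansionPrimitive]
  ring

theorem cellAverage_quarticExpansion {h : ℝ} (hh : h ≠ 0) (c W0 S1 S2 S3 S4 a b : ℝ) :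
    (1 / h) * ∫ x in (c + a * h)..(c + b * h), quarticExpansion c W0 S1 S2 S3 S4 x
      = W0 * (b - a) + S1 * h * (b ^ 2 - a ^ 2) / 2 + S2 * h ^ 2 * (b ^ 3 - a ^ 3) / 6
        + S3 * h ^ 3 * (b ^ 4 - a ^ 4) / 24 + S4 * h ^ 4 * (b ^ 5 - a ^ 5) / 120 := by
  rw [integral_quarticExpansion]
  field_simp

/-- Derivatives of the across-interface quartic expansion from four cell averages:
if the quartic `W̄` has prescribed cell averages over `I_{i-1}, I_i, I_{i+1}, I_{i+2}`,
then its first and second derivative coefficients at `x_{i+1/2}` are as stated. -/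
theorem equilibrium_slope_formulas (xh Δx W0 S1 S2 S3 S4 Wm1 Wi Wp1 Wp2 : ℝ)
    (hΔx : 0 < Δx)
    (Wbar : ℝ → ℝ)
    (hWbar : ∀ x, Wbar x = W0 + S1 * (x - xh) + (1 / 2) * S2 * (x - xh) ^ 2
        + (1 / 6) * S3 * (x - xh) ^ 3 + (1 / 24) * S4 * (x - xh) ^ 4)
    (hm1 : (1 / Δx) * ∫ x in (xh + (-2 : ℝ) * Δx)..(xh + (-1 : ℝ) * Δx), Wbar x = Wm1)
    (h0 : (1 / Δx) * ∫ x in (xh + (-1 : ℝ) * Δx)..(xh + (0 : ℝ) * Δx), Wbar x = Wi)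
    (hp1 : (1 / Δx) * ∫ x in (xh + (0 : ℝ) * Δx)..(xh + (1 : ℝ) * Δx), Wbar x = Wp1)
    (hp2 : (1 / Δx) * ∫ x in (xh + (1 : ℝ) * Δx)..(xh + (2 : ℝ) * Δx), Wbar x = Wp2) :
    S1 = (-(1 / 12) * (Wp2 - Wm1) + (5 / 4) * (Wp1 - Wi)) / Δx
    ∧ S2 = (-(1 / 8) * (Wp2 + Wm1) + (31 / 8) * (Wp1 + Wi) - (15 / 2) * W0) / Δx ^ 2 := by
  have hΔx₀ : Δx ≠ 0 := hΔx.ne'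
  obtain rfl : Wbar = quarticExpansion xh W0 S1 S2 S3 S4 := funext hWbar
  rw [cellAverage_quarticExpansion hΔx₀] at hm1 h0 hp1 hp2
  constructor
  · refine eq_div_of_mul_eq hΔx₀ ?_
    linear_combination (1 / 12) * hm1 - (5 / 4) * h0 + (5 / 4) * hp1 - (1 / 12) * hp2
  · refine eq_div_of_mul_eq (pow_ne_zero 2 hΔx₀) ?_
    linear_combination (-(1 / 8)) * hm1 + (31 / 8) * h0 + (31 / 8) * hp1 - (1 / 8) * hp2
end

section
/- Given three cell averages W_{i-1}, W_i, W_{i+1} over uniform cells of width Δx and two cell interface values W_{i-1/2}, W_{i+1/2}, there exists a unique polynomial W(x) of degree at most 4 whose averages over I_{i-1}, I_i, I_{i+1} equal W_{i-1}, W_i, W_{i+1} and whose values at x_{i-1/2} and x_{i+1/2} equal W_{i-1/2} and W_{i+1/2}. -/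
/-!
If a quartic `p` has zero integral over each of the adjacent cells `[a, b]`, `[b, c]`, `[c, d]`,
the mean value theorem for integrals gives a root of `p` inside each cell; together with roots at
the interfaces `b` and `c` these are five distinct roots, so `p = 0`. Hence the linear map sending a
quartic to its three cell integrals and two interface values, a map between 5-dimensional spaces,
is injective and therefore bijective.
-/

open Polynomial Set intervalIntegral

theorem exists_mem_Ioo_eq_zero_of_integral_eq_zero {f : ℝ → ℝ} {a b : ℝ} (hab : a < b)
    (hf : Continuous f) (h : ∫ x in a..b, f x = 0) : ∃ c ∈ Ioo a b, f c = 0 := by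
  obtain ⟨c, hc, hfc⟩ := exists_eq_interval_average hab.ne hf.continuousOn
  rw [uIoo_of_le hab.le] at hc
  exact ⟨c, hc, by rw [hfc, interval_average_eq_div, h, zero_div]⟩

namespace Polynomial

theorem eq_zero_of_integral_eq_zero_of_eval_eq_zero {p : ℝ[X]} (hp : p.degree ≤ 4)
    {a b c d : ℝ} (hab : a < b) (hbc : b < c) (hcd : c < d)
    (hI₁ : ∫ x in a..b, p.eval x = 0) (hI₂ : ∫ x in b..c, p.eval x = 0)
    (hI₃ : ∫ x in c..d, p.eval x = 0) (hb : p.eval b = 0) (hc : p.eval c = 0) : p = 0 := by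
  obtain ⟨r₁, hr₁, hp₁⟩ := exists_mem_Ioo_eq_zero_of_integral_eq_zero hab p.continuous hI₁
  obtain ⟨r₂, hr₂, hp₂⟩ := exists_mem_Ioo_eq_zero_of_integral_eq_zero hbc p.continuous hI₂
  obtain ⟨r₃, hr₃, hp₃⟩ := exists_mem_Ioo_eq_zero_of_integral_eq_zero hcd p.continuous hI₃
  have hroots : StrictMono ![r₁, b, r₂, c, r₃] := by
    refine Fin.strictMono_iff_lt_succ.mpr fun i => ?_
    fin_cases i <;> simp [hr₁.2, hr₂.1, hr₂.2, hr₃.1]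
  refine eq_zero_of_natDegree_lt_card_of_eval_eq_zero p hroots.injective (fun i => ?_) ?_
  · fin_cases i <;> simp [hp₁, hb, hp₂, hc, hp₃]
  · simpa using Nat.lt_succ_of_le (natDegree_le_of_degree_le hp)

noncomputable def intervalIntegralₗ (a b : ℝ) : ℝ[X] →ₗ[ℝ] ℝ where
  toFun p := ∫ x in a..b, p.eval x
  map_add' p q := by
    simpa only [eval_add] using
      integral_add (p.continuous.intervalIntegrable a b) (q.continuous.intervalIntegrable a b)
  map_smul' r p := by simp only [eval_smul, smul_eq_mul, integral_const_mul, RingHom.id_apply]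

noncomputable def cellData (a b c d : ℝ) : ℝ[X] →ₗ[ℝ] Fin 5 → ℝ :=
  LinearMap.pi ![intervalIntegralₗ a b, intervalIntegralₗ b c, intervalIntegralₗ c d,
    leval b, leval c]

theorem cellData_apply (a b c d : ℝ) (p : ℝ[X]) :
    cellData a b c d p = ![∫ x in a..b, p.eval x, ∫ x in b..c, p.eval x, ∫ x in c..d, p.eval x,
      p.eval b, p.eval c] := by
  ext i; fin_cases i <;> rfl

variable {a b c d : ℝ}

theorem injOn_cellData (hab : a < b) (hbc : b < c) (hcd : c < d) :
    InjOn (cellData a b c d) {p | p.degree ≤ 4} := by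
  intro p hp q hq hpq
  have h : cellData a b c d (p - q) = 0 := by rw [map_sub, hpq, sub_self]
  simp only [cellData_apply, funext_iff, Fin.forall_fin_succ] at h
  rw [← sub_eq_zero]
  exact eq_zero_of_integral_eq_zero_of_eval_eq_zero ((degree_sub_le p q).trans (max_le hp hq))
    hab hbc hcd h.1 h.2.1 h.2.2.1 h.2.2.2.1 h.2.2.2.2.1

theorem existsUnique_degree_le_four_cellData_eq (hab : a < b) (hbc : b < c) (hcd : c < d)
    (w : Fin 5 → ℝ) : ∃! p : ℝ[X], p.degree ≤ 4 ∧ cellData a b c d p = w := by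
  have hdeg : ∀ p : ℝ[X], p ∈ degreeLT ℝ 5 ↔ p.degree ≤ 4 := fun p => by
    rw [show 5 = 4 + 1 from rfl, degreeLT_succ_eq_degreeLE, mem_degreeLE]; rfl
  let Φ := cellData a b c d ∘ₗ (degreeLT ℝ 5).subtype ∘ₗ (degreeLTEquiv ℝ 5).symm.toLinearMap
  have hΦ : Function.Injective Φ := fun v v' h =>
    (degreeLTEquiv ℝ 5).symm.injective <| Subtype.ext <|
      injOn_cellData hab hbc hcd ((hdeg _).mp (Subtype.prop _)) ((hdeg _).mp (Subtype.prop _)) h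
  obtain ⟨v, hv⟩ := LinearMap.injective_iff_surjective.mp hΦ w
  refine ⟨_, ⟨(hdeg _).mp (Subtype.prop _), hv⟩, fun q hq => ?_⟩
  exact injOn_cellData hab hbc hcd hq.1 ((hdeg _).mp (Subtype.prop _)) (hq.2.trans hv.symm)

end Polynomial

/-- Existence and uniqueness of the degree-4 polynomial matching three cell averages
and two cell interface values on a uniform grid. -/
theorem compact_quartic_reconstruction_unique
    (xi Δx Wm1 Wi Wp1 Wl Wr : ℝ) (hΔx : 0 < Δx) :
    ∃! p : Polynomial ℝ, p.degree ≤ 4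
      ∧ (1 / Δx) * (∫ x in (xi + (-3 / 2 : ℝ) * Δx)..(xi + (-1 / 2 : ℝ) * Δx), p.eval x) = Wm1
      ∧ (1 / Δx) * (∫ x in (xi + (-1 / 2 : ℝ) * Δx)..(xi + (1 / 2 : ℝ) * Δx), p.eval x) = Wi
      ∧ (1 / Δx) * (∫ x in (xi + (1 / 2 : ℝ) * Δx)..(xi + (3 / 2 : ℝ) * Δx), p.eval x) = Wp1
      ∧ p.eval (xi - Δx / 2) = Wl
      ∧ p.eval (xi + Δx / 2) = Wr := by
  have hb : xi + (-1 / 2 : ℝ) * Δx = xi - Δx / 2 := by ring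
  have hc : xi + (1 / 2 : ℝ) * Δx = xi + Δx / 2 := by ring
  have haverage : ∀ I W : ℝ, 1 / Δx * I = W ↔ I = Δx * W := fun I W => by
    rw [one_div, inv_mul_eq_iff_eq_mul₀ hΔx.ne']
  refine (existsUnique_congr fun p => ?_).mp
    (existsUnique_degree_le_four_cellData_eq (a := xi + (-3 / 2 : ℝ) * Δx) (b := xi - Δx / 2)
      (c := xi + Δx / 2) (d := xi + (3 / 2 : ℝ) * Δx) (by linarith) (by linarith) (by linarith)
      ![Δx * Wm1, Δx * Wi, Δx * Wp1, Wl, Wr])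
  simp only [hb, hc, haverage, cellData_apply, funext_iff, Fin.forall_fin_succ]
  simp
end

section
/- For the quadratic interpolant p₀ at nodes y_{(j-1)_2} = y_j − Δy + Δy/(2√3), y_{j_1} = y_j − Δy/(2√3), y_{j_2} = y_j + Δy/(2√3) of data W_{(j-1)_2}, W_{j_1}, W_{j_2}, the smoothness indicator β̌₀ := Δy³·∫_{y_j − Δy/2}^{y_j + Δy/2} (p₀''(y))² dy equals (4/(√3 − 1)²)·[√3·W_{(j-1)_2} − 3·W_{j_1} + (3 − √3)·W_{j_2}]². -/
/-!
`p''` is the constant `2 c` with `c = p.coeff 2`, so the integral is `Δy (2 c)²`. The second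
divided difference of `p`, with denominators cleared, recovers `c` from the three values; at the
given nodes the gaps are `(3 - √3) Δy / 3`, `Δy` and `√3 Δy / 3` (as `1 / (2√3) = √3 / 6`), which
gives `√3 W₁ - 3 W₂ + (3 - √3) W₃ = c (√3 - 1) Δy²`.
-/

namespace Polynomial

variable {R : Type*}

theorem eval_of_degree_le_two [Semiring R] {p : R[X]} (hp : p.degree ≤ 2) (x : R) :
    p.eval x = p.coeff 2 * x ^ 2 + p.coeff 1 * x + p.coeff 0 := by
  conv_lhs => rw [eq_quadratic_of_degree_le_two hp]
  simp

theorem derivative_derivative_of_degree_le_two [CommSemiring R] {p : R[X]}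
    (hp : p.degree ≤ 2) : derivative (derivative p) = C (2 * p.coeff 2) := by
  rw [eq_quadratic_of_degree_le_two hp, C_mul, mul_comm (C 2)]
  simp [one_add_one_eq_two]

theorem second_divided_difference_of_degree_le_two [CommRing R] {p : R[X]}
    (hp : p.degree ≤ 2) (x₀ x₁ x₂ : R) :
    (x₂ - x₁) * p.eval x₀ - (x₂ - x₀) * p.eval x₁ + (x₁ - x₀) * p.eval x₂ =
      p.coeff 2 * ((x₁ - x₀) * (x₂ - x₀) * (x₂ - x₁)) := by
  simp only [eval_of_degree_le_two hp]
  ring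

end Polynomial

open Polynomial in
/-- The smoothness indicator of the quadratic interpolant `p₀` on the nonuniform
Gaussian nodes equals the stated explicit square. -/
theorem smoothness_indicator_formula (yj Δy W1 W2 W3 : ℝ) (hΔy : 0 < Δy)
    (p : Polynomial ℝ) (hp : p.degree ≤ 2)
    (h1 : p.eval (yj - Δy + Δy / (2 * Real.sqrt 3)) = W1)
    (h2 : p.eval (yj - Δy / (2 * Real.sqrt 3)) = W2)
    (h3 : p.eval (yj + Δy / (2 * Real.sqrt 3)) = W3) :
    Δy ^ 3 * ∫ y in (yj - Δy / 2)..(yj + Δy / 2),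
        ((Polynomial.derivative (Polynomial.derivative p)).eval y) ^ 2
      = (4 / (Real.sqrt 3 - 1) ^ 2) *
          (Real.sqrt 3 * W1 - 3 * W2 + (3 - Real.sqrt 3) * W3) ^ 2 := by
  set s := Real.sqrt 3
  have hs : s ^ 2 = 3 := Real.sq_sqrt (by norm_num)
  have hs1 : s - 1 ≠ 0 := by nlinarith [Real.sqrt_nonneg 3]
  have hnode : Δy / (2 * s) = s * Δy / 6 := by
    have : s ≠ 0 := by positivity
    field_simp
    linear_combination (-2) * hs
  have hdd := second_divided_difference_of_degree_le_two hp
    (yj - Δy + Δy / (2 * s)) (yj - Δy / (2 * s)) (yj + Δy / (2 * s))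
  rw [h1, h2, h3, hnode] at hdd
  have hcomb : s * W1 - 3 * W2 + (3 - s) * W3 = p.coeff 2 * (s - 1) * Δy ^ 2 := by
    refine mul_left_cancel₀ hΔy.ne' ?_
    linear_combination 3 * hdd - p.coeff 2 * Δy ^ 3 / 3 * hs
  rw [derivative_derivative_of_degree_le_two hp, hcomb]
  simp only [eval_C, intervalIntegral.integral_const, smul_eq_mul]
  field_simp
  ring
end

section
/- If coefficients satisfy the recovery relations F₀ = (4𝔽(Δt/2) − 𝔽(Δt))/Δt and F₁ = 4(𝔽(Δt) − 2𝔽(Δt/2))/Δt² where 𝔽(δ) = ∫₀^δ F(s) ds for an arbitrary C² function F, then F₀ = F(0) + O(Δt²) and F₁ = F'(0) + O(Δt). -/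
/-!
Write `∫₀^δ F = δ F(0) + δ²/2 F'(0) + R(δ)`. Since `F' s - F' 0 = O(s)`, integrating twice gives
`F x - F 0 - x F'(0) = O(x²)` and then `R(δ) = O(δ³)`. Both recovery formulas are exact on the
quadratic part: `4𝔽(δ/2) - 𝔽(δ) - δ F(0) = 4R(δ/2) - R(δ)` and
`4(𝔽(δ) - 2𝔽(δ/2)) - δ² F'(0) = 4R(δ) - 8R(δ/2)`, so dividing by `δ` and `δ²` leaves `O(δ²)`
and `O(δ)`.
-/

open Asymptotics Filter Topology Interval intervalIntegral

namespace Asymptotics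

theorem IsBigO.intervalIntegral_pow_succ {E : Type*} [NormedAddCommGroup E] [NormedSpace ℝ E]
    {g : ℝ → E} {n : ℕ} (hg : g =O[𝓝 0] (· ^ n)) :
    (fun δ => ∫ s in (0 : ℝ)..δ, g s) =O[𝓝 0] (· ^ (n + 1)) := by
  obtain ⟨C, hC, hgC⟩ := hg.exists_nonneg
  obtain ⟨ε, hε, hball⟩ := Metric.eventually_nhds_iff_ball.1 hgC.bound
  refine .of_bound C ?_
  filter_upwards [Metric.ball_mem_nhds 0 hε] with δ hδ
  have hbound : ∀ s ∈ Ι 0 δ, ‖g s‖ ≤ C * |δ| ^ n := fun s hs => by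
    have hsδ : |s| ≤ |δ| := by
      rcases Set.mem_uIoc.1 hs with ⟨h0, h1⟩ | ⟨h0, h1⟩
      · exact abs_le_abs_of_nonneg h0.le h1
      · exact abs_le_abs_of_nonpos h1 h0.le
    calc ‖g s‖ ≤ C * ‖s ^ n‖ :=
          hball s (Metric.mem_ball.2 (by simpa using hsδ.trans_lt (by simpa using hδ)))
      _ ≤ C * |δ| ^ n := by gcongr; simpa [norm_pow] using pow_le_pow_left₀ (abs_nonneg s) hsδ n
  calc ‖∫ s in (0 : ℝ)..δ, g s‖ ≤ C * |δ| ^ n * |δ - 0| :=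
        norm_integral_le_of_norm_le_const hbound
    _ = C * ‖δ ^ (n + 1)‖ := by rw [sub_zero, norm_pow, Real.norm_eq_abs, pow_succ, mul_assoc]

theorem IsBigO.comp_div_const {𝕜 E : Type*} [NormedField 𝕜] [NormedAddCommGroup E]
    {R : 𝕜 → E} {n : ℕ} (hR : R =O[𝓝 0] (· ^ n)) (c : 𝕜) :
    (fun δ => R (δ / c)) =O[𝓝 0] (· ^ n) := by
  have hc : Tendsto (· / c) (𝓝 (0 : 𝕜)) (𝓝 0) := by
    simpa using (tendsto_id (x := 𝓝 (0 : 𝕜))).div_const c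
  refine (hR.comp_tendsto hc).trans ?_
  simpa only [Function.comp_def, div_pow, div_eq_inv_mul, mul_pow, inv_pow] using
    (isBigO_refl (· ^ n) (𝓝 (0 : 𝕜))).const_mul_left (c ^ n)⁻¹

theorem IsBigO.div_pow {α 𝕜 : Type*} [NormedField 𝕜] {l : Filter α} {f u : α → 𝕜} {n k : ℕ}
    (h : f =O[l] (fun x => u x ^ (n + k))) : (fun x => f x / u x ^ k) =O[l] (fun x => u x ^ n) := by
  obtain ⟨C, hC, hfC⟩ := h.exists_nonneg
  refine .of_bound C ?_
  filter_upwards [hfC.bound] with x hx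
  calc ‖f x / u x ^ k‖ = ‖f x‖ / ‖u x‖ ^ k := by rw [norm_div, norm_pow]
    _ ≤ C * ‖u x‖ ^ (n + k) / ‖u x‖ ^ k := by
        gcongr; simpa [norm_pow] using hx
    _ = C * ‖u x‖ ^ n * (‖u x‖ ^ k / ‖u x‖ ^ k) := by ring
    _ ≤ C * ‖u x ^ n‖ := by
        rw [norm_pow]
        exact mul_le_of_le_one_right (by positivity) (div_self_le_one _)

end Asymptotics

section Taylor

variable {E : Type*} [NormedAddCommGroup E] [NormedSpace ℝ E] [CompleteSpace E] {F : ℝ → E}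

theorem ContDiff.isBigO_sub_sub_smul_deriv (hF : ContDiff ℝ 2 F) :
    (fun x => F x - F 0 - x • deriv F 0) =O[𝓝 0] (· ^ 2) := by
  have hF' : ContDiff ℝ 1 (deriv F) := hF.deriv'
  have hFd : Differentiable ℝ F := hF.differentiable two_ne_zero
  have hderiv : (fun s => deriv F s - deriv F 0) =O[𝓝 0] (· ^ 1) := by
    simpa using ((hF'.differentiable one_ne_zero) 0).hasDerivAt.isBigO_sub
  refine hderiv.intervalIntegral_pow_succ.congr' (Eventually.of_forall fun x => ?_)
    EventuallyEq.rfl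
  dsimp only
  rw [integral_sub (hF'.continuous.intervalIntegrable _ _) intervalIntegrable_const,
    integral_deriv_eq_sub (fun y _ => hFd y) (hF'.continuous.intervalIntegrable _ _),
    integral_const, sub_zero]

theorem ContDiff.isBigO_integral_sub_taylor (hF : ContDiff ℝ 2 F) :
    (fun δ => (∫ s in (0 : ℝ)..δ, F s) - (δ • F 0 + (δ ^ 2 / 2) • deriv F 0))
      =O[𝓝 0] (· ^ 3) := by
  refine hF.isBigO_sub_sub_smul_deriv.intervalIntegral_pow_succ.congr'
    (Eventually.of_forall fun δ => ?_) EventuallyEq.rfl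
  have hlin : IntervalIntegrable (fun s : ℝ => s • deriv F 0) MeasureTheory.volume 0 δ :=
    (continuous_id.smul continuous_const).intervalIntegrable _ _
  dsimp only
  rw [integral_sub _ hlin,
    integral_sub (hF.continuous.intervalIntegrable _ _) intervalIntegrable_const,
    intervalIntegral.integral_smul_const, integral_id, integral_const]
  · rw [sub_zero, zero_pow two_ne_zero, sub_zero, sub_sub]
  · exact (hF.continuous.sub continuous_const).intervalIntegrable _ _

end Taylor

/-- The flux-recovery formulas applied to the exact time integral of an arbitrary C²
function recover `F(0)` to second order and `F'(0)` to first order as `Δt → 0⁺`. -/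
theorem flux_recovery_accuracy (F : ℝ → ℝ) (hF : ContDiff ℝ 2 F) :
    (fun Δt : ℝ =>
        (4 * (∫ s in (0:ℝ)..(Δt / 2), F s) - ∫ s in (0:ℝ)..Δt, F s) / Δt - F 0)
      =O[nhdsWithin (0 : ℝ) (Set.Ioi 0)] (fun Δt => Δt ^ 2)
    ∧ (fun Δt : ℝ =>
        4 * ((∫ s in (0:ℝ)..Δt, F s) - 2 * ∫ s in (0:ℝ)..(Δt / 2), F s) / Δt ^ 2
          - deriv F 0)
      =O[nhdsWithin (0 : ℝ) (Set.Ioi 0)] (fun Δt => Δt) := by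
  set R := fun δ : ℝ => (∫ s in (0 : ℝ)..δ, F s) - (δ • F 0 + (δ ^ 2 / 2) • deriv F 0)
    with hR_def
  have hR : R =O[𝓝[>] 0] (· ^ 3) := hF.isBigO_integral_sub_taylor.mono nhdsWithin_le_nhds
  have hR_half : (fun δ => R (δ / 2)) =O[𝓝[>] 0] (· ^ 3) :=
    (hF.isBigO_integral_sub_taylor.comp_div_const 2).mono nhdsWithin_le_nhds
  have hne : ∀ᶠ δ in 𝓝[>] (0 : ℝ), δ ≠ 0 :=
    eventually_mem_nhdsWithin.mono fun δ h => ne_of_gt h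
  constructor
  · refine ((hR_half.const_mul_left 4).sub hR).div_pow (n := 2) (k := 1) (u := id)
      |>.congr' ?_ ?_
    · filter_upwards [hne] with δ hδ
      simp only [hR_def, smul_eq_mul, id]
      field_simp
      ring
    · exact EventuallyEq.rfl
  · refine ((hR.const_mul_left 4).sub (hR_half.const_mul_left 8)).div_pow (n := 1) (k := 2)
      (u := id) |>.congr' ?_ ?_
    · filter_upwards [hne] with δ hδ
      simp only [hR_def, smul_eq_mul, id]
      field_simp
      ring
    · exact Eventually.of_forall fun δ => pow_one δ
end
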